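/- arXiv:0911.1074 — 5 statements merged into one kernel-verified Lean document; each statement's English description precedes it below -/
import Mathlib

section
/- Let a : ℕ → ℚ be any sequence and define b : ℕ → ℚ by b_n = n·a_{n−1} for n ≥ 1 and b_0 = 0. Then a is in S₊ if and only if b is in S₋. In particular, for every n ≥ 1 one has the identity ∑_{k=0}^{n} (n choose k)(−1)^k · k·a_{k−1} = −n·∑_{k=0}^{n−1} (n−1 choose k)(−1)^k a_k. -/
/-!
By `(n + 1) C(n, k) = (k + 1) C(n + 1, k + 1)`, the binomial transform of `b` at `n + 1` is
`-(n + 1)` times the transform of `a` at `n`. Since `b (n + 1) = (n + 1) a n` and `n + 1 ≠ 0`, the fixed-point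
equation for `a` at `n` is the anti-fixed-point equation for `b` at `n + 1`; at `0` the latter
holds because `b 0 = 0`.
-/

open Finset

variable {R : Type*} [CommRing R]

def binomialTransform (a : ℕ → R) (n : ℕ) : R :=
  ∑ k ∈ range (n + 1), (n.choose k : R) * (-1) ^ k * a k

def indexShift (a : ℕ → R) (n : ℕ) : R :=
  n * a (n - 1)

lemma binomialTransform_indexShift_zero (a : ℕ → R) :
    binomialTransform (indexShift a) 0 = 0 := by
  simp [binomialTransform, indexShift]

lemma binomialTransform_indexShift_succ (a : ℕ → R) (n : ℕ) :
    binomialTransform (indexShift a) (n + 1) = -(n + 1) * binomialTransform a n := by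
  rw [binomialTransform, sum_range_succ', binomialTransform, mul_sum]
  simp only [indexShift, Nat.cast_zero, zero_mul, mul_zero, add_zero, Nat.add_sub_cancel]
  refine sum_congr rfl fun k _ => ?_
  have hchoose : ((n : R) + 1) * n.choose k = (n + 1).choose (k + 1) * ((k : R) + 1) := by
    exact_mod_cast congrArg (Nat.cast : ℕ → R) (Nat.add_one_mul_choose_eq n k)
  push_cast
  linear_combination (-1) ^ k * a k * hchoose

lemma binomialTransform_eq_self_iff_indexShift [NoZeroDivisors R] [CharZero R] (a : ℕ → R) :
    (∀ n, binomialTransform a n = a n) ↔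
      ∀ n, binomialTransform (indexShift a) n = -indexShift a n := by
  have hstep (n : ℕ) : binomialTransform (indexShift a) (n + 1) = -indexShift a (n + 1) ↔
      binomialTransform a n = a n := by
    have hn : -((n : R) + 1) ≠ 0 := neg_ne_zero.mpr (by exact_mod_cast n.succ_ne_zero)
    rw [binomialTransform_indexShift_succ, indexShift, Nat.add_sub_cancel, Nat.cast_succ,
      ← neg_mul, mul_right_inj' hn]
  refine ⟨fun ha n => ?_, fun hb n => (hstep n).mp (hb (n + 1))⟩
  cases n with
  | zero => simp [binomialTransform_indexShift_zero, indexShift]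
  | succ n => exact (hstep n).mpr (ha n)

theorem Splus_iff_shifted_Sminus (a b : ℕ → ℚ)
    (hb0 : b 0 = 0) (hb : ∀ m : ℕ, 1 ≤ m → b m = (m : ℚ) * a (m - 1)) :
    ((∀ n : ℕ, ∑ k ∈ Finset.range (n + 1), (n.choose k : ℚ) * (-1) ^ k * a k = a n) ↔
      (∀ n : ℕ, ∑ k ∈ Finset.range (n + 1), (n.choose k : ℚ) * (-1) ^ k * b k = -b n)) ∧
    (∀ n : ℕ, 1 ≤ n →
      ∑ k ∈ Finset.range (n + 1), (n.choose k : ℚ) * (-1) ^ k * ((k : ℚ) * a (k - 1)) =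
        -(n : ℚ) * ∑ k ∈ Finset.range n, ((n - 1).choose k : ℚ) * (-1) ^ k * a k) := by
  have hb_eq : b = indexShift a := by
    funext m
    rcases Nat.eq_zero_or_pos m with rfl | hm
    · simp [hb0, indexShift]
    · exact hb m hm
  subst hb_eq
  refine ⟨binomialTransform_eq_self_iff_indexShift a, fun n hn => ?_⟩
  obtain ⟨m, rfl⟩ := Nat.exists_eq_add_of_le' hn
  simpa [binomialTransform, indexShift] using binomialTransform_indexShift_succ a m
end

section
/- Let a : ℕ → ℚ be a sequence in S₋, i.e. ∑_{k=0}^{n} (n choose k)(−1)^k a_k = −a_n for every n ≥ 0. Then for all integers m, n ≥ 0, ∑_{k=0}^{n} [ C((m−1)n+k−1, k) + (−1)^{n−k} C(mn, k) ] · a_{n−k} = 0, where C(x, k) denotes the generalized binomial coefficient x(x−1)⋯(x−k+1)/k! for an integer x (possibly negative) and a natural number k. -/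
/-!
Put `G n x = ∑ₖ (-1)^(n-k) C(x,k) a (n-k)`. Since `C(r+k-1, k) = (-1)^k C(-r, k)`, the claimed
identity reads `F n (m n) = 0` for `F n x = G n x + (-1)^n G n (n - x)`.
Pascal's rule gives `G (n+1) (x+1) = G (n+1) x + G n x`, and `F` inherits this recursion because
`x ↦ n - x` reverses the step. On the column `x = 0` we have `G n 0 = (-1)^n a n`, while
`G n n = -a n` is exactly the defining relation of `S₋` after reflecting `k ↦ n - k`; so `F`
vanishes on that column, and an array obeying Pascal's recursion, with constant row `n = 0`,
that vanishes on one column vanishes everywhere.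
-/

/-- Generalized binomial coefficient `C(x, k) = x(x-1)⋯(x-k+1)/k!` for an integer `x`. -/
def genChoose (x : ℤ) (k : ℕ) : ℚ :=
  (∏ j ∈ Finset.range k, ((x : ℚ) - (j : ℚ))) / (k.factorial : ℚ)

open Finset Polynomial

theorem genChoose_eq_choose (x : ℤ) (k : ℕ) : genChoose x k = ((Ring.choose x k : ℤ) : ℚ) := by
  rw [show ((Ring.choose x k : ℤ) : ℚ) = Ring.choose (x : ℚ) k by
      simpa using Ring.map_choose (Int.castRingHom ℚ) x k,
    Ring.choose_eq_smul, ← aeval_eq_smeval, aeval_def, eval₂_eq_eval_map, descPochhammer_map,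
    descPochhammer_eval_eq_prod_range, genChoose, smul_eq_mul, div_eq_inv_mul]

theorem Int.choose_add_sub_one (r : ℤ) (k : ℕ) :
    Ring.choose (r + k - 1) k = (-1) ^ k * Ring.choose (-r) k := by
  rw [Ring.choose_neg, Units.smul_def, Int.coe_negOnePow_natCast, smul_eq_mul, ← mul_assoc,
    ← pow_add, ← two_mul, pow_mul, neg_one_sq, one_pow, one_mul]

theorem eq_zero_of_pascal_recursion {M : Type*} [AddZeroClass M] {f : ℕ → ℤ → M}
    (h_zero : ∀ x, f 0 (x + 1) = f 0 x)
    (h_succ : ∀ n x, f (n + 1) (x + 1) = f (n + 1) x + f n x)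
    (h_boundary : ∀ n, f n 0 = 0) (n : ℕ) (x : ℤ) : f n x = 0 := by
  suffices Function.Periodic (f n) 1 by simpa [h_boundary] using this.int_mul_eq x
  induction n with
  | zero => exact h_zero
  | succ n ih =>
    intro x
    have hn : f n x = 0 := by simpa [h_boundary] using ih.int_mul_eq x
    rw [h_succ, hn, add_zero]

section

variable {R : Type*} [CommRing R]

/-- The class `S₋` of the paper. -/
def IsNegBinomialInvariant (a : ℕ → R) : Prop :=
  ∀ n, ∑ k ∈ range (n + 1), (n.choose k : R) * (-1) ^ k * a k = -a n

def signedChooseSum (a : ℕ → R) (n : ℕ) (x : ℤ) : R :=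
  ∑ k ∈ range (n + 1), (-1) ^ (n - k) * ((Ring.choose x k : ℤ) : R) * a (n - k)

variable (a : ℕ → R)

theorem signedChooseSum_zero_right (n : ℕ) : signedChooseSum a n 0 = (-1) ^ n * a n := by
  simp [signedChooseSum, Ring.choose_zero_ite]

theorem signedChooseSum_succ_add_one (n : ℕ) (x : ℤ) :
    signedChooseSum a (n + 1) (x + 1) = signedChooseSum a (n + 1) x + signedChooseSum a n x := by
  simp only [signedChooseSum, sum_range_succ' _ (n + 1), Nat.succ_sub_succ, Nat.sub_zero,
    Ring.choose_succ_succ, Ring.choose_zero_right, Int.cast_add, mul_add, add_mul, sum_add_distrib]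
  ring

variable {a}

theorem IsNegBinomialInvariant.signedChooseSum_self (ha : IsNegBinomialInvariant a) (n : ℕ) :
    signedChooseSum a n n = -a n := by
  rw [signedChooseSum, ← sum_range_reflect, ← ha n]
  refine sum_congr rfl fun k hk => ?_
  have hk : k ≤ n := Nat.lt_succ_iff.mp (mem_range.mp hk)
  rw [Nat.add_sub_cancel, Nat.sub_sub_self hk, Ring.choose_natCast, Int.cast_natCast,
    Nat.choose_symm hk]
  ring

theorem IsNegBinomialInvariant.signedChooseSum_add_neg_one_pow_mul_sub
    (ha : IsNegBinomialInvariant a) (n : ℕ) (x : ℤ) :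
    signedChooseSum a n x + (-1) ^ n * signedChooseSum a n (n - x) = 0 := by
  refine eq_zero_of_pascal_recursion (f := fun n x ↦
    signedChooseSum a n x + (-1) ^ n * signedChooseSum a n (n - x)) ?_ ?_ ?_ n x
  · simp [signedChooseSum]
  · intro n x
    have hsub : ((n + 1 : ℕ) : ℤ) - x = (n - x) + 1 := by push_cast; ring
    simp only [hsub, show ((n + 1 : ℕ) : ℤ) - (x + 1) = n - x by push_cast; ring,
      signedChooseSum_succ_add_one]
    ring
  · intro n
    simp [signedChooseSum_zero_right, ha.signedChooseSum_self]

end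

theorem Sminus_binomial_identity (a : ℕ → ℚ)
    (ha : ∀ n : ℕ, ∑ k ∈ Finset.range (n + 1), (n.choose k : ℚ) * (-1) ^ k * a k = -a n)
    (m n : ℕ) :
    ∑ k ∈ Finset.range (n + 1),
      (genChoose (((m : ℤ) - 1) * (n : ℤ) + (k : ℤ) - 1) k +
        (-1 : ℚ) ^ (n - k) * genChoose ((m : ℤ) * (n : ℤ)) k) * a (n - k) = 0 := by
  have hsign : ∀ k ≤ n, (-1 : ℚ) ^ k = (-1) ^ n * (-1) ^ (n - k) := fun k hk => by
    rw [← pow_add, show n + (n - k) = k + 2 * (n - k) by omega, pow_add, pow_mul, neg_one_sq,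
      one_pow, mul_one]
  have hsummand : ∀ k ∈ range (n + 1),
      (genChoose (((m : ℤ) - 1) * (n : ℤ) + (k : ℤ) - 1) k +
        (-1 : ℚ) ^ (n - k) * genChoose ((m : ℤ) * (n : ℤ)) k) * a (n - k) =
      (-1) ^ (n - k) * ((Ring.choose ((m : ℤ) * n) k : ℤ) : ℚ) * a (n - k) +
        (-1) ^ n * ((-1) ^ (n - k) * ((Ring.choose ((n : ℤ) - m * n) k : ℤ) : ℚ) * a (n - k)) := by
    intro k hk
    rw [genChoose_eq_choose, genChoose_eq_choose, Int.choose_add_sub_one,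
      show -(((m : ℤ) - 1) * n) = n - m * n by ring, Int.cast_mul, Int.cast_pow, Int.cast_neg,
      Int.cast_one, hsign k (Nat.lt_succ_iff.mp (mem_range.mp hk))]
    ring
  rw [sum_congr rfl hsummand, sum_add_distrib, ← mul_sum]
  exact IsNegBinomialInvariant.signedChooseSum_add_neg_one_pow_mul_sub ha n (m * n)
end

section
/- Let a : ℕ → ℚ be a sequence in S₋, i.e. ∑_{k=0}^{n} (n choose k)(−1)^k a_k = −a_n for every n ≥ 0 (in particular a_0 = 0). Let p ≥ 3 be an odd prime and for each j ≥ 1 set S_j = ∑_{k=1}^{p−1} H_{k−1}^{(j−1)} · a_{p−k}/k, where H_r^{(n)} is the multiple harmonic sum and H_r^{(0)} = 1. Then for every integer m ≥ 1, ∑_{j=1}^{p−1} ( (m−1)^j − (−m)^j ) · p^j · S_j = 0 (an exact identity of rational numbers). -/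
/-!
Summing over `j` first, `∑ⱼ xʲ Sⱼ = ∑ₖ a_{p-k} · multichoose x k`, because the generating
polynomial `∑ⱼ H_r^{(j)} xʲ` is `∏_{v ≤ r} (1 + x / v)`; up to the sign `(-1)ᵏ` this is
`choose (-x) k`. For `a ∈ S₋` and odd `p`, the polynomial `G(z) = ∑ₖ (-1)ᵏ a_{p-k} choose z k`
satisfies `G(p - z) = G(z)`, and the identity is `G(p - mp) = G(mp)` read through
`x = (m - 1)p` and `x = -mp`.
-/

/-- The multiple harmonic sum `H_r^{(n)} = ∑_{1 ≤ k₁ < ⋯ < kₙ ≤ r} 1/(k₁⋯kₙ)`,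
with `H_r^{(0)} = 1` and `H_r^{(n)} = 0` for `n > r`. -/
def mhs (r n : ℕ) : ℚ :=
  ∑ k ∈ (Finset.univ.filter fun k : Fin n → Fin (r + 1) =>
      (∀ i j : Fin n, i < j → k i < k j) ∧ ∀ i, 0 < (k i : ℕ)),
    ∏ i, (1 : ℚ) / ((k i : ℕ) : ℚ)

open Finset Polynomial

theorem neg_one_pow_sub_of_le {R : Type*} [Ring R] {n t : ℕ} (h : t ≤ n) :
    (-1 : R) ^ (n - t) = (-1) ^ n * (-1) ^ t := by
  rw [← pow_sub_mul_pow (-1 : R) h, mul_assoc, ← pow_add, Even.neg_one_pow ⟨t, rfl⟩, mul_one]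

theorem Ring.choose_natCast_sub_eq_sum {R : Type*} [CommRing R] [BinomialRing R] {n k : ℕ}
    (hk : k ≤ n) (z : R) :
    Ring.choose ((n : R) - z) k =
      ∑ j ∈ range (k + 1), (-1) ^ j * ((n - j).choose (k - j) : R) * Ring.choose z j := by
  have hshift : z - n + k - 1 = z + -((n - k + 1 : ℕ) : R) := by push_cast [Nat.cast_sub hk]; ring
  rw [show (n : R) - z = -(z - n) by ring, Ring.choose_neg, hshift,
    Ring.add_choose_eq _ (Commute.all _ _), Nat.sum_antidiagonal_eq_sum_range_succ
      (fun i j => Ring.choose z i * Ring.choose (-((n - k + 1 : ℕ) : R)) j), Units.smul_def,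
    zsmul_eq_mul, Int.cast_negOnePow_natCast, mul_sum]
  refine sum_congr rfl fun j hj => ?_
  have hjk : j ≤ k := Nat.lt_succ_iff.mp (mem_range.mp hj)
  have hcast : ((n - k + 1 + (k - j) : ℕ) : R) - 1 = ((n - j : ℕ) : R) := by
    rw [show n - k + 1 + (k - j) = n - j + 1 by omega, Nat.cast_succ, add_sub_cancel_right]
  rw [Ring.choose_neg, Units.smul_def, zsmul_eq_mul, Int.cast_negOnePow_natCast, ← Nat.cast_add,
    hcast, Ring.choose_natCast, neg_one_pow_sub_of_le hjk]
  linear_combination (-1 : R) ^ j * ((n - j).choose (k - j) : R) * Ring.choose z j *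
    (Even.neg_one_pow ⟨k, rfl⟩ : (-1 : R) ^ (k + k) = 1)

theorem Ring.multichoose_eq_neg_one_pow_mul_choose_neg {R : Type*} [CommRing R] [BinomialRing R]
    (x : R) (k : ℕ) : Ring.multichoose x k = (-1) ^ k * Ring.choose (-x) k := by
  rw [Ring.choose_neg', Units.smul_def, zsmul_eq_mul, Int.cast_negOnePow_natCast, ← mul_assoc,
    ← pow_add, Even.neg_one_pow ⟨k, rfl⟩, one_mul]

def NegBinomialInvariant {R : Type*} [CommRing R] (a : ℕ → R) : Prop :=
  ∀ n : ℕ, ∑ k ∈ range (n + 1), (n.choose k : R) * (-1) ^ k * a k = -a n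

namespace NegBinomialInvariant

variable {R : Type*} [CommRing R] {a : ℕ → R}

theorem apply_zero [IsAddTorsionFree R] (ha : NegBinomialInvariant a) : a 0 = 0 :=
  self_eq_neg.mp (by simpa using ha 0)

theorem sum_neg_one_pow_mul_choose_mul_sub (ha : NegBinomialInvariant a) (n : ℕ) :
    ∑ t ∈ range (n + 1), (-1) ^ t * (n.choose t : R) * a (n - t) = (-1) ^ (n + 1) * a n := by
  rw [← sum_range_reflect, pow_succ, mul_assoc, neg_one_mul, ← ha n, mul_sum]
  refine sum_congr rfl fun t ht => ?_
  have htn : t ≤ n := Nat.lt_succ_iff.mp (mem_range.mp ht)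
  rw [Nat.add_sub_cancel, Nat.choose_symm htn, Nat.sub_sub_self htn, neg_one_pow_sub_of_le htn]
  ring

theorem sum_mul_choose_natCast_sub [BinomialRing R] (ha : NegBinomialInvariant a) (n : ℕ)
    (z : R) :
    ∑ k ∈ range (n + 1), (-1) ^ k * a (n - k) * Ring.choose ((n : R) - z) k =
      (-1) ^ (n + 1) * ∑ k ∈ range (n + 1), (-1) ^ k * a (n - k) * Ring.choose z k := by
  -- In the basis `choose z j`, the coefficient is a reflected binomial transform of `a` at `n - j`.
  have hexpand : ∀ k ∈ range (n + 1), (-1) ^ k * a (n - k) * Ring.choose ((n : R) - z) k =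
      ∑ j ∈ range (k + 1), Ring.choose z j *
        ((-1) ^ (k - j) * ((n - j).choose (k - j) : R) * a (n - j - (k - j))) := by
    intro k hk
    rw [Ring.choose_natCast_sub_eq_sum (Nat.lt_succ_iff.mp (mem_range.mp hk)), mul_sum]
    refine sum_congr rfl fun j hj => ?_
    have hjk : j ≤ k := Nat.lt_succ_iff.mp (mem_range.mp hj)
    rw [neg_one_pow_sub_of_le hjk, show n - j - (k - j) = n - k by omega]
    ring
  rw [sum_congr rfl hexpand, sum_range_diag_flip (n + 1) fun j t =>
    Ring.choose z j * ((-1) ^ t * ((n - j).choose t : R) * a (n - j - t)), mul_sum]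
  refine sum_congr rfl fun j hj => ?_
  have hjn : j ≤ n := Nat.lt_succ_iff.mp (mem_range.mp hj)
  rw [← mul_sum, show n + 1 - j = n - j + 1 by omega, sum_neg_one_pow_mul_choose_mul_sub ha,
    show n - j + 1 = (n + 1) - j by omega, neg_one_pow_sub_of_le (by omega : j ≤ n + 1)]
  ring

end NegBinomialInvariant

section Field

variable {K : Type*} [Field K] [CharZero K]

theorem Ring.multichoose_eq_ascPochhammer_eval_div (x : K) (k : ℕ) :
    Ring.multichoose x k = (ascPochhammer K k).eval x / k.factorial := by
  rw [eq_div_iff (Nat.cast_ne_zero.mpr k.factorial_ne_zero), mul_comm, ← nsmul_eq_mul,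
    Ring.factorial_nsmul_multichoose_eq_ascPochhammer, ascPochhammer_smeval_eq_eval]

theorem prod_Icc_one_add_div (x : K) (r : ℕ) :
    ∏ v ∈ Icc 1 r, (1 + x / v) = (ascPochhammer K r).eval (x + 1) / r.factorial := by
  induction r with
  | zero => simp
  | succ r ih =>
    rw [prod_Icc_succ_top (by omega), ih, ascPochhammer_succ_right, eval_mul, eval_add, eval_X,
      eval_natCast, Nat.factorial_succ]
    push_cast
    field_simp
    ring

theorem div_mul_prod_Icc_one_add_div (x : K) (r : ℕ) :
    x / (r + 1) * ∏ v ∈ Icc 1 r, (1 + x / v) = Ring.multichoose x (r + 1) := by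
  rw [prod_Icc_one_add_div, Ring.multichoose_eq_ascPochhammer_eval_div, ascPochhammer_succ_left,
    eval_mul, eval_X, eval_comp, eval_add, eval_X, eval_one, Nat.factorial_succ]
  push_cast
  field_simp

theorem NegBinomialInvariant.sum_Icc_mul_multichoose {a : ℕ → K}
    (ha : NegBinomialInvariant a) {p : ℕ} (hp : 1 ≤ p) (x : K) :
    ∑ k ∈ Icc 1 (p - 1), a (p - k) * Ring.multichoose x k =
      ∑ k ∈ range (p + 1), (-1) ^ k * a (p - k) * Ring.choose (-x) k - a p := by
  obtain ⟨N, rfl⟩ : ∃ N, p = N + 1 := ⟨p - 1, by omega⟩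
  rw [sum_range_succ, sum_range_succ', Nat.sub_self, ha.apply_zero, mul_zero, zero_mul, add_zero,
    Nat.sub_zero, pow_zero, one_mul, Ring.choose_zero_right, mul_one, add_sub_cancel_right,
    Nat.add_sub_cancel, ← Ico_add_one_right_eq_Icc, sum_Ico_eq_sum_range, Nat.add_sub_cancel]
  refine sum_congr rfl fun k _ => ?_
  rw [add_comm 1 k, Ring.multichoose_eq_neg_one_pow_mul_choose_neg]
  ring

end Field

theorem mhs_eq_sum_powersetCard (r n : ℕ) :
    mhs r n = ∑ s ∈ (Icc 1 r).powersetCard n, ∏ v ∈ s, (1 : ℚ) / v := by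
  have hmono : ∀ k ∈ univ.filter fun k : Fin n → Fin (r + 1) =>
      (∀ i j, i < j → k i < k j) ∧ ∀ i, 0 < (k i : ℕ), StrictMono fun i => (k i : ℕ) :=
    fun k hk _ _ hij => (mem_filter.mp hk).2.1 _ _ hij
  refine sum_bij (fun k _ => univ.image fun i => (k i : ℕ)) ?_ ?_ ?_ ?_
  · intro k hk
    rw [mem_powersetCard, card_image_of_injective _ (hmono k hk).injective, card_fin]
    refine ⟨fun v hv => ?_, rfl⟩
    obtain ⟨i, -, rfl⟩ := mem_image.mp hv
    exact mem_Icc.mpr ⟨(mem_filter.mp hk).2.2 i, Nat.lt_succ_iff.mp (k i).isLt⟩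
  · intro k₁ hk₁ k₂ hk₂ h
    have hrange := congrArg (fun s : Finset ℕ => (s : Set ℕ)) h
    simp only [coe_image, coe_univ, Set.image_univ] at hrange
    funext i
    exact Fin.ext (congrFun ((hmono k₁ hk₁).range_inj (hmono k₂ hk₂) |>.mp hrange) i)
  · intro s hs
    obtain ⟨hsub, hcard⟩ := mem_powersetCard.mp hs
    have hmem i : s.orderEmbOfFin hcard i ∈ Icc 1 r := hsub (s.orderEmbOfFin_mem hcard i)
    refine ⟨fun i => ⟨s.orderEmbOfFin hcard i, Nat.lt_succ_of_le (mem_Icc.mp (hmem i)).2⟩,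
      mem_filter.mpr ⟨mem_univ _, fun i j hij => (s.orderEmbOfFin hcard).strictMono hij,
        fun i => (mem_Icc.mp (hmem i)).1⟩, image_orderEmbOfFin_univ s hcard⟩
  · intro k hk
    rw [prod_image fun i _ j _ h => (hmono k hk).injective h]

theorem mhs_eq_zero_of_lt {r n : ℕ} (h : r < n) : mhs r n = 0 := by
  rw [mhs_eq_sum_powersetCard, powersetCard_eq_empty.mpr (by simpa using h), sum_empty]

theorem sum_mhs_mul_pow (r : ℕ) (x : ℚ) :
    ∑ j ∈ range (r + 1), mhs r j * x ^ j = ∏ v ∈ Icc 1 r, (1 + x / v) := by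
  rw [prod_one_add, sum_powerset, Nat.card_Icc, Nat.add_sub_cancel]
  refine sum_congr rfl fun j _ => ?_
  rw [mhs_eq_sum_powersetCard, sum_mul]
  refine sum_congr rfl fun s hs => ?_
  rw [← (mem_powersetCard.mp hs).2, ← prod_const, ← prod_mul_distrib]
  exact prod_congr rfl fun v _ => by ring

theorem sum_Icc_pow_mul_mhs {k N : ℕ} (hk : 1 ≤ k) (hkN : k ≤ N) (x : ℚ) :
    ∑ j ∈ Icc 1 N, x ^ j * (mhs (k - 1) (j - 1) / k) = Ring.multichoose x k := by
  obtain ⟨r, rfl⟩ : ∃ r, k = r + 1 := ⟨k - 1, by omega⟩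
  have htrunc : ∑ t ∈ range N, mhs r t * x ^ t = ∑ t ∈ range (r + 1), mhs r t * x ^ t :=
    (sum_subset (range_subset_range.mpr hkN) fun t ht hnt => by
      rw [mhs_eq_zero_of_lt (by simp at ht hnt; omega), zero_mul]).symm
  rw [← Ico_add_one_right_eq_Icc, sum_Ico_eq_sum_range, Nat.add_sub_cancel,
    ← div_mul_prod_Icc_one_add_div, ← sum_mhs_mul_pow, ← htrunc, mul_sum]
  push_cast
  refine sum_congr rfl fun t _ => ?_
  rw [Nat.add_sub_cancel_left, pow_add]
  ring

theorem sum_Icc_pow_mul_sum_mhs (N : ℕ) (b : ℕ → ℚ) (x : ℚ) :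
    ∑ j ∈ Icc 1 N, x ^ j * ∑ k ∈ Icc 1 N, mhs (k - 1) (j - 1) * b k / k =
      ∑ k ∈ Icc 1 N, b k * Ring.multichoose x k := by
  simp_rw [mul_sum]
  rw [sum_comm]
  refine sum_congr rfl fun k hk => ?_
  rw [← sum_Icc_pow_mul_mhs (mem_Icc.mp hk).1 (mem_Icc.mp hk).2 x, mul_sum]
  exact sum_congr rfl fun j _ => by ring

theorem Sminus_power_sum_identity_general (a : ℕ → ℚ)
    (ha : ∀ n : ℕ, ∑ k ∈ Finset.range (n + 1), (n.choose k : ℚ) * (-1) ^ k * a k = -a n)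
    (p : ℕ) (hp : p.Prime) (hp3 : 3 ≤ p)
    (S : ℕ → ℚ)
    (hS : ∀ j : ℕ, 1 ≤ j →
      S j = ∑ k ∈ Finset.Icc 1 (p - 1), mhs (k - 1) (j - 1) * a (p - k) / (k : ℚ))
    (m : ℕ) :
    ∑ j ∈ Finset.Icc 1 (p - 1),
      (((m : ℚ) - 1) ^ j - (-(m : ℚ)) ^ j) * (p : ℚ) ^ j * S j = 0 := by
  have hpow_sum (x : ℚ) : ∑ j ∈ Icc 1 (p - 1), x ^ j * S j =
      ∑ k ∈ range (p + 1), (-1) ^ k * a (p - k) * Ring.choose (-x) k - a p := by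
    rw [← NegBinomialInvariant.sum_Icc_mul_multichoose ha (by omega), ← sum_Icc_pow_mul_sum_mhs]
    exact sum_congr rfl fun j hj => by rw [hS j (mem_Icc.mp hj).1]
  have hsymm := NegBinomialInvariant.sum_mul_choose_natCast_sub ha p (m * p : ℚ)
  rw [(hp.odd_of_ne_two (by omega)).add_one.neg_one_pow, one_mul] at hsymm
  calc _ = ∑ j ∈ Icc 1 (p - 1), ((m - 1) * p : ℚ) ^ j * S j -
        ∑ j ∈ Icc 1 (p - 1), (-(m * p) : ℚ) ^ j * S j := by
        rw [← sum_sub_distrib]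
        exact sum_congr rfl fun j _ => by rw [mul_pow, ← neg_mul, mul_pow]; ring
    _ = 0 := by
        rw [hpow_sum, hpow_sum, neg_neg, show -((m - 1) * p : ℚ) = p - m * p by ring, hsymm,
          sub_self]

theorem Sminus_power_sum_identity (a : ℕ → ℚ)
    (ha : ∀ n : ℕ, ∑ k ∈ Finset.range (n + 1), (n.choose k : ℚ) * (-1) ^ k * a k = -a n)
    (p : ℕ) (hp : p.Prime) (hp3 : 3 ≤ p)
    (S : ℕ → ℚ)
    (hS : ∀ j : ℕ, 1 ≤ j →
      S j = ∑ k ∈ Finset.Icc 1 (p - 1), mhs (k - 1) (j - 1) * a (p - k) / (k : ℚ))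
    (m : ℕ) (hm : 1 ≤ m) :
    ∑ j ∈ Finset.Icc 1 (p - 1),
      (((m : ℚ) - 1) ^ j - (-(m : ℚ)) ^ j) * (p : ℚ) ^ j * S j = 0 :=
  Sminus_power_sum_identity_general a ha p hp hp3 S hS m
end

section
/- Let n be a positive integer and let p be a prime with p > n+1. Then the multiple harmonic sum H_{p−1}^{(n)} = ∑_{1≤k₁<k₂<⋯<k_n≤p−1} 1/(k₁k₂⋯k_n) satisfies H_{p−1}^{(n)} ≡ 0 (mod p), i.e. the p-adic valuation of the rational number H_{p−1}^{(n)} is at least 1. -/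
/-!
Write `r = p - 1`. Clearing denominators, `r! ^ n * H_r^{(n)}` is the elementary symmetric
polynomial `e_n` evaluated at the integers `r!/1, …, r!/r`. Modulo `p` this is `r! ^ n` times `e_n`
of the inverses of the nonzero residues, which are just the nonzero residues again. Multiplying the
nonzero residues by a generator `g` of `(ℤ/p)ˣ` permutes them and scales `e_n` by `g ^ n`, which is
not `1` because `0 < n < p - 1`; so `e_n` vanishes mod `p`, while `p ∤ r!`.
-/

/-- `x ≡ y (mod p^m)` for rationals: `x - y = p^m * u / v` with `p ∤ v`. -/
def modCong (p m : ℕ) (x y : ℚ) : Prop :=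
  ∃ u v : ℤ, ¬ (p : ℤ) ∣ v ∧ x - y = (p : ℚ) ^ m * u / v

open Finset
open scoped Nat

theorem sum_filter_strictMono_prod_eq_sum_powersetCard {α β : Type*} [LinearOrder α]
    [Fintype α] [CommSemiring β] (s : Finset α) (n : ℕ) (f : α → β) :
    ∑ k ∈ univ.filter (fun k : Fin n → α => StrictMono k ∧ ∀ i, k i ∈ s), ∏ i, f (k i) =
      ∑ t ∈ s.powersetCard n, ∏ a ∈ t, f a := by
  have card_image {k : Fin n → α} (hk : StrictMono k) : #(univ.image k) = n := by
    rw [card_image_of_injective _ hk.injective, card_univ, Fintype.card_fin]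
  refine sum_bij' (fun k _ => univ.image k)
    (fun t ht => t.orderEmbOfFin (mem_powersetCard.1 ht).2) ?_ ?_ ?_ ?_ ?_
  · simp only [mem_filter, mem_univ, true_and, mem_powersetCard, and_imp]
    intro k hk hks
    exact ⟨by simpa [subset_iff] using hks, card_image hk⟩
  · intro t ht
    have hts := (mem_powersetCard.1 ht).1
    simp only [mem_filter, mem_univ, true_and]
    exact ⟨(t.orderEmbOfFin _).strictMono, fun i => hts (t.orderEmbOfFin_mem _ i)⟩
  · intro k hk
    simp only [mem_filter, mem_univ, true_and] at hk
    exact (orderEmbOfFin_unique (card_image hk.1) (fun i => mem_image_of_mem k (mem_univ i))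
      hk.1).symm
  · intro t ht
    exact image_orderEmbOfFin_univ t _
  · intro k hk
    simp only [mem_filter, mem_univ, true_and] at hk
    exact (prod_image fun i _ j _ hij => hk.1.injective hij).symm

theorem mhs_eq_esymm (r n : ℕ) :
    mhs r n = ((Icc 1 r).val.map fun m : ℕ => (m : ℚ)⁻¹).esymm n := by
  have hpos : (univ.filter fun a : Fin (r + 1) => 0 < (a : ℕ)).map Fin.valEmbedding =
      Icc 1 r := by
    ext m
    simp only [mem_map, mem_filter, mem_univ, true_and, Fin.valEmbedding_apply, mem_Icc]
    constructor
    · rintro ⟨a, ha, rfl⟩; omega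
    · rintro ⟨h1, h2⟩; exact ⟨⟨m, by omega⟩, h1, rfl⟩
  rw [← hpos, map_val, Multiset.map_map, esymm_map_val, mhs,
    ← sum_filter_strictMono_prod_eq_sum_powersetCard]
  refine sum_congr ?_ fun k _ => by simp
  ext k
  simp [StrictMono]

theorem Multiset.map_esymm {R S : Type*} [CommSemiring R] [CommSemiring S] (f : R →+* S)
    (s : Multiset R) (n : ℕ) : f (s.esymm n) = (s.map f).esymm n := by
  simp [Multiset.esymm, map_multiset_sum, map_multiset_prod, Multiset.powersetCard_map,
    Multiset.map_map]

theorem Multiset.esymm_eq_zero_of_map_mul_eq {R : Type*} [CommRing R] [IsDomain R]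
    {s : Multiset R} {g : R} {n : ℕ} (hs : s.map (g * ·) = s) (hg : g ^ n ≠ 1) :
    s.esymm n = 0 := by
  have h : g ^ n * s.esymm n = s.esymm n := by
    simpa only [smul_eq_mul, hs] using s.pow_smul_esymm g n
  exact (mul_left_eq_self₀.1 h).resolve_left hg

theorem FiniteField.esymm_univ_erase_zero_eq_zero {F : Type*} [Field F] [Fintype F]
    [DecidableEq F] {n : ℕ} (hn : 0 < n) (hnq : n < Fintype.card F - 1) :
    (univ.erase (0 : F)).val.esymm n = 0 := by
  obtain ⟨g, hg⟩ := IsCyclic.exists_generator (α := Fˣ)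
  have hgn : (g : F) ^ n ≠ 1 := by
    rw [← Units.val_pow_eq_pow_val, Ne, Units.val_eq_one]
    intro h
    have := Nat.le_of_dvd hn (orderOf_dvd_of_pow_eq_one h)
    rw [orderOf_eq_card_of_forall_mem_zpowers hg, Nat.card_eq_fintype_card,
      Fintype.card_units] at this
    omega
  refine Multiset.esymm_eq_zero_of_map_mul_eq ?_ hgn
  have : (univ.erase (0 : F)).map (Equiv.mulLeft₀ (g : F) g.ne_zero).toEmbedding =
      univ.erase 0 := by
    ext x
    simp
  exact (map_val _ _).symm.trans (congrArg Finset.val this)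

theorem ZMod.natCast_ne_zero_of_mem_Icc {p m : ℕ} (hm : m ∈ Icc 1 (p - 1)) :
    (m : ZMod p) ≠ 0 := by
  rw [mem_Icc] at hm
  rw [Ne, ZMod.natCast_eq_zero_iff]
  exact Nat.not_dvd_of_pos_of_lt hm.1 (by omega)

theorem ZMod.esymm_inv_Icc_eq_zero {p n : ℕ} [Fact p.Prime] (hn : 0 < n) (hnp : n < p - 1) :
    ((Icc 1 (p - 1)).val.map fun m : ℕ => (m : ZMod p)⁻¹).esymm n = 0 := by
  have hinj : Set.InjOn (fun m : ℕ => (m : ZMod p)⁻¹) (Icc 1 (p - 1)) := by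
    intro a ha b hb hab
    simp only [coe_Icc, Set.mem_Icc] at ha hb
    have := (ZMod.natCast_eq_natCast_iff' a b p).1 (inv_injective hab)
    rwa [Nat.mod_eq_of_lt (by omega), Nat.mod_eq_of_lt (by omega)] at this
  have himage : (Icc 1 (p - 1)).image (fun m : ℕ => (m : ZMod p)⁻¹) = univ.erase 0 := by
    refine eq_of_subset_of_card_le (fun x hx => ?_) ?_
    · obtain ⟨m, hm, rfl⟩ := mem_image.1 hx
      exact mem_erase.2 ⟨inv_ne_zero (ZMod.natCast_ne_zero_of_mem_Icc hm), mem_univ _⟩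
    · rw [Finset.card_image_of_injOn hinj, card_erase_of_mem (mem_univ _), card_univ, ZMod.card,
        Nat.card_Icc]
      omega
  rw [← image_val_of_injOn hinj, himage]
  exact FiniteField.esymm_univ_erase_zero_eq_zero hn (by rwa [ZMod.card])

theorem Multiset.natCast_esymm_map_div {K : Type*} [Field K] (s : Multiset ℕ) (D n : ℕ)
    (hdvd : ∀ m ∈ s, m ∣ D) (hne : ∀ m ∈ s, (m : K) ≠ 0) :
    (((s.map (D / ·)).esymm n : ℕ) : K) =
      (D : K) ^ n * (s.map fun m : ℕ => (m : K)⁻¹).esymm n := by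
  rw [← smul_eq_mul, Multiset.pow_smul_esymm, ← Nat.coe_castRingHom, Multiset.map_esymm,
    Multiset.map_map, Multiset.map_map]
  congr 1
  refine Multiset.map_congr rfl fun m hm => ?_
  simp [Nat.cast_div (hdvd m hm) (hne m hm), div_eq_mul_inv]

theorem modCong_one_zero_of_natCast_eq_mul {p N D : ℕ} {x : ℚ} (hN : p ∣ N) (hD : ¬p ∣ D)
    (h : (N : ℚ) = D * x) : modCong p 1 x 0 := by
  obtain ⟨u, rfl⟩ := hN
  have hD0 : (D : ℚ) ≠ 0 := Nat.cast_ne_zero.2 fun h0 => hD (h0 ▸ dvd_zero p)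
  refine ⟨u, D, by exact_mod_cast hD, ?_⟩
  push_cast at h ⊢
  rw [sub_zero, pow_one, eq_div_iff hD0]
  linear_combination -h

theorem multiple_harmonic_sum_zero_mod_p (n : ℕ) (hn : 0 < n)
    (p : ℕ) (hp : p.Prime) (hpn : n + 1 < p) :
    modCong p 1 (mhs (p - 1) n) 0 := by
  have : Fact p.Prime := ⟨hp⟩
  have hdvd : ∀ m ∈ Icc 1 (p - 1), m ∣ (p - 1)! := fun m hm =>
    Nat.dvd_factorial (mem_Icc.1 hm).1 (mem_Icc.1 hm).2
  set N := ((Icc 1 (p - 1)).val.map ((p - 1)! / ·)).esymm n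
  have hN_rat : (N : ℚ) = ((p - 1)! ^ n : ℕ) * mhs (p - 1) n := by
    have hne : ∀ m ∈ Icc 1 (p - 1), (m : ℚ) ≠ 0 := fun m hm =>
      Nat.cast_ne_zero.2 (Nat.one_le_iff_ne_zero.1 (mem_Icc.1 hm).1)
    rw [Multiset.natCast_esymm_map_div _ _ _ hdvd hne, mhs_eq_esymm, Nat.cast_pow]
  have hN_mod : (N : ZMod p) = 0 := by
    rw [Multiset.natCast_esymm_map_div _ _ _ hdvd fun m => ZMod.natCast_ne_zero_of_mem_Icc,
      ZMod.esymm_inv_Icc_eq_zero hn (by omega), mul_zero]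
  have hfact : ¬p ∣ (p - 1)! ^ n := fun h =>
    absurd (hp.dvd_factorial.1 (hp.dvd_of_dvd_pow h)) (by omega)
  exact modCong_one_zero_of_natCast_eq_mul ((ZMod.natCast_eq_zero_iff N p).1 hN_mod) hfact hN_rat
end

section
/- The sequence a_n = (−1)^n χ₃(n) belongs to S₋: for every n ≥ 0, ∑_{k=0}^{n} (n choose k) χ₃(k) = −(−1)^n χ₃(n), where χ₃ is the Legendre symbol modulo 3. Moreover, the sequence b_n = (n+1)·C_n/4^n, where C_n = (1/(n+1))·C(2n,n) is the n-th Catalan number, belongs to S₊: for every n ≥ 0, ∑_{k=0}^{n} (n choose k)(−1)^k · C(2k,k)/4^k = C(2n,n)/4^n. -/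
/-! The signed binomial transform is an iterated forward difference,
`∑ C(n,k) (-1)^k f k = (-1)^n Δⁿ f 0`, so both claims are computations of `Δⁿ`.

For `a j = (-1)^j χ₃(j)` the relation `χ₃(j) + χ₃(j+1) + χ₃(j+2) = 0` says `Δ a j = a (j + 2)`,
hence `Δⁿ a 0 = a (2n) = χ₃(2n) = -χ₃(n)`.

For `c k = C(2k,k)/4^k = (1/2)_k / k!` we use the closed form
`Δⁿ ((a)_· / ·!) m = (-1)^n (1-a)_n (a)_m / (n+m)!`, which follows by induction on `n` from
`(a + m) - (n + m + 1) = -(1 - a + n)`; at `a = 1/2`, `m = 0` it gives `Δⁿ c 0 = (-1)^n c n`. -/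

/-- The Legendre symbol modulo 3. -/
def chi3 (k : ℕ) : ℤ :=
  if k % 3 = 1 then 1 else if k % 3 = 2 then -1 else 0

open Finset Nat fwdDiff

theorem sum_choose_mul_neg_one_pow_mul_eq_fwdDiff_iter {R : Type*} [CommRing R] (f : ℕ → R)
    (n : ℕ) :
    ∑ k ∈ range (n + 1), (n.choose k : R) * (-1) ^ k * f k = (-1) ^ n * (Δ_[1])^[n] f 0 := by
  rw [fwdDiff_iter_eq_sum_shift, mul_sum]
  refine sum_congr rfl fun k hk => ?_
  obtain ⟨d, rfl⟩ := Nat.exists_eq_add_of_le (Nat.lt_succ_iff.mp (mem_range.mp hk))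
  have hsign : (-1 : R) ^ (k + d) * (-1) ^ d = (-1) ^ k := by
    rw [pow_add, mul_assoc, ← pow_add, Even.neg_one_pow ⟨d, rfl⟩, mul_one]
  rw [Nat.add_sub_cancel_left, zsmul_eq_mul, smul_eq_mul, mul_one, zero_add]
  push_cast
  rw [← hsign]
  ring

theorem fwdDiff_iter_eq_of_fwdDiff_eq_comp_add {G : Type*} [AddCommGroup G] {f : ℕ → G} {d : ℕ}
    (hf : Δ_[1] f = fun j => f (j + d)) (n j : ℕ) :
    (Δ_[1])^[n] f j = f (j + n * d) := by
  induction n generalizing j with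
  | zero => simp
  | succ n ih =>
    rw [Function.iterate_succ_apply, hf, fwdDiff_iter_comp_add, ih]
    ring_nf

theorem chi3_add_chi3_add_one_add_chi3_add_two (j : ℕ) :
    chi3 j + chi3 (j + 1) + chi3 (j + 2) = 0 := by
  have : j % 3 = 0 ∨ j % 3 = 1 ∨ j % 3 = 2 := by omega
  rcases this with h | h | h <;> simp [chi3, Nat.add_mod, h]

theorem chi3_two_mul (n : ℕ) : chi3 (2 * n) = -chi3 n := by
  have : n % 3 = 0 ∨ n % 3 = 1 ∨ n % 3 = 2 := by omega
  rcases this with h | h | h <;> simp [chi3, Nat.mul_mod, h]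

theorem fwdDiff_neg_one_pow_mul_chi3 :
    Δ_[1] (fun j => (-1 : ℤ) ^ j * chi3 j) = fun j => (-1) ^ (j + 2) * chi3 (j + 2) := by
  funext j
  simp only [fwdDiff, pow_succ]
  linear_combination -(-1 : ℤ) ^ j * chi3_add_chi3_add_one_add_chi3_add_two j

theorem fwdDiff_iter_ascPochhammer_eval_div_factorial {K : Type*} [Field K] [CharZero K] (a : K)
    (n m : ℕ) :
    (Δ_[1])^[n] (fun i => (ascPochhammer K i).eval a / i !) m =
      (-1) ^ n * (ascPochhammer K n).eval (1 - a) * (ascPochhammer K m).eval a / (n + m)! := by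
  induction n generalizing m with
  | zero => simp
  | succ n ih =>
    rw [Function.iterate_succ_apply', fwdDiff, ih, ih, ascPochhammer_succ_eval,
      ascPochhammer_succ_eval, show n + (m + 1) = n + m + 1 by omega,
      show n + 1 + m = n + m + 1 by omega, factorial_succ]
    push_cast
    have : ((n + m)! : K) ≠ 0 := Nat.cast_ne_zero.mpr (factorial_ne_zero _)
    have : (n + m + 1 : K) ≠ 0 := by exact_mod_cast succ_ne_zero (n + m)
    field_simp
    ring

theorem centralBinom_div_four_pow {K : Type*} [Field K] [CharZero K] (n : ℕ) :
    (n.centralBinom : K) / 4 ^ n = (ascPochhammer K n).eval (1 / 2) / n ! := by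
  induction n with
  | zero => simp
  | succ n ih =>
    have hrec : ((n + 1 : ℕ) : K) * (n + 1).centralBinom = 2 * (2 * n + 1) * n.centralBinom := by
      exact_mod_cast succ_mul_centralBinom_succ n
    have hfac : (n ! : K) ≠ 0 := Nat.cast_ne_zero.mpr (factorial_ne_zero n)
    rw [div_eq_div_iff (pow_ne_zero _ (by norm_num)) hfac] at ih
    rw [div_eq_div_iff (pow_ne_zero _ (by norm_num)) (Nat.cast_ne_zero.mpr (factorial_ne_zero _)),
      ascPochhammer_succ_eval, factorial_succ, pow_succ]
    push_cast at hrec ⊢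
    linear_combination (n ! : K) * hrec + 2 * (2 * n + 1) * ih

theorem legendre3_in_Sminus_catalan_in_Splus :
    (∀ n : ℕ, ∑ k ∈ Finset.range (n + 1), (n.choose k : ℤ) * chi3 k =
      -((-1) ^ n * chi3 n)) ∧
    (∀ n : ℕ, ∑ k ∈ Finset.range (n + 1),
        (n.choose k : ℚ) * (-1) ^ k * (((2 * k).choose k : ℚ) / 4 ^ k) =
      ((2 * n).choose n : ℚ) / 4 ^ n) := by
  constructor
  · intro n
    calc ∑ k ∈ range (n + 1), (n.choose k : ℤ) * chi3 k
        = ∑ k ∈ range (n + 1), (n.choose k : ℤ) * (-1) ^ k * ((-1) ^ k * chi3 k) :=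
          sum_congr rfl fun k _ => by
            rw [mul_assoc, ← mul_assoc ((-1) ^ k), ← pow_add, Even.neg_one_pow ⟨k, rfl⟩, one_mul]
      _ = (-1) ^ n * (Δ_[1])^[n] (fun j => (-1) ^ j * chi3 j) 0 :=
          sum_choose_mul_neg_one_pow_mul_eq_fwdDiff_iter _ n
      _ = -((-1) ^ n * chi3 n) := by
          rw [fwdDiff_iter_eq_of_fwdDiff_eq_comp_add fwdDiff_neg_one_pow_mul_chi3, zero_add,
            mul_comm n 2, chi3_two_mul, pow_mul, neg_one_sq, one_pow]
          ring
  · intro n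
    have hc : ∀ k : ℕ, ((2 * k).choose k : ℚ) / 4 ^ k = (ascPochhammer ℚ k).eval (1 / 2) / k ! :=
      fun k => by rw [← centralBinom_eq_two_mul_choose, centralBinom_div_four_pow]
    simp only [hc]
    rw [sum_choose_mul_neg_one_pow_mul_eq_fwdDiff_iter,
      fwdDiff_iter_ascPochhammer_eval_div_factorial]
    norm_num [← mul_assoc, ← mul_div_assoc, ← pow_add, Even.neg_one_pow ⟨n, rfl⟩]
end
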